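/- Let d ≥ 3 and let k_1, ..., k_d be integers with each k_i ≥ 3, satisfying the angle-sum condition Σ_{i=1}^d (k_i - 2)/k_i > 2. Then there exists a unique l_0 > 0 such that Σ_{i=1}^d 2·arcsin(cos(π/k_i)/cosh(l_0/2)) = 2π. -/

import Mathlib

/-!
The total angle `l ↦ ∑ᵢ 2 arcsin (cos (π / kᵢ) / cosh (l / 2))` is continuous and strictly
decreasing in `l ≥ 0`. At `l = 0` each summand is the Euclidean angle `π (kᵢ - 2) / kᵢ`, so the
angle-sum condition puts the total above `2π`, while every summand tends to `0` as `l → ∞`.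
The intermediate value theorem gives a side length with total angle `2π`, and strict
monotonicity makes it unique.
-/

open Real Filter Topology Set

/-- The interior angle of a regular hyperbolic `k`-gon with side length `l`. -/
noncomputable def regularPolygonAngle (k l : ℝ) : ℝ :=
  2 * arcsin (cos (π / k) / cosh (l / 2))

lemma tendsto_cosh_atTop : Tendsto cosh atTop atTop :=
  tendsto_atTop_mono (fun x => by rw [cosh_eq]; linarith [exp_pos (-x)])
    (tendsto_exp_atTop.atTop_div_const two_pos)

lemma continuous_regularPolygonAngle (k : ℝ) : Continuous (regularPolygonAngle k) := by
  unfold regularPolygonAngle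
  fun_prop (disch := exact fun x => (cosh_pos _).ne')

lemma regularPolygonAngle_zero {k : ℝ} (hk : 1 ≤ k) :
    regularPolygonAngle k 0 = π * ((k - 2) / k) := by
  have hk₀ : 0 < k := by linarith
  have hθ : π / k ≤ π := div_le_self pi_pos.le hk
  rw [regularPolygonAngle, zero_div, cosh_zero, div_one, arcsin_eq_pi_div_two_sub_arccos,
    arccos_cos (by positivity) hθ]
  field_simp

lemma strictAntiOn_regularPolygonAngle {k : ℝ} (hk : 2 < k) :
    StrictAntiOn (regularPolygonAngle k) (Ici 0) := by
  have hc : 0 < cos (π / k) :=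
    cos_pos_of_mem_Ioo ⟨by linarith [div_pos pi_pos (by linarith : (0 : ℝ) < k), pi_pos],
      div_lt_div_of_pos_left pi_pos two_pos hk⟩
  have hmem : ∀ l, cos (π / k) / cosh (l / 2) ∈ Icc (-1 : ℝ) 1 := fun l =>
    ⟨by linarith [div_nonneg hc.le (cosh_pos (l / 2)).le],
      div_le_one_of_le₀ ((cos_le_one _).trans (one_le_cosh _)) (cosh_pos _).le⟩
  intro a ha b hb hab
  have hcosh : cosh (a / 2) < cosh (b / 2) :=
    cosh_strictMonoOn (div_nonneg (mem_Ici.1 ha) zero_le_two :)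
      (div_nonneg (mem_Ici.1 hb) zero_le_two :) (by linarith)
  have := strictMonoOn_arcsin (hmem b) (hmem a) (div_lt_div_of_pos_left hc (cosh_pos _) hcosh)
  unfold regularPolygonAngle
  linarith

lemma tendsto_regularPolygonAngle_atTop (k : ℝ) :
    Tendsto (regularPolygonAngle k) atTop (𝓝 0) := by
  have hratio : Tendsto (fun l => cos (π / k) / cosh (l / 2)) atTop (𝓝 0) :=
    tendsto_const_nhds.div_atTop (tendsto_cosh_atTop.comp (tendsto_id.atTop_div_const two_pos))
  have := ((continuous_arcsin.tendsto 0).comp hratio).const_mul 2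
  rw [arcsin_zero, mul_zero] at this
  exact this

lemma existsUnique_pos_eq_of_strictAntiOn {f : ℝ → ℝ} {a c : ℝ} (hcont : Continuous f)
    (hanti : StrictAntiOn f (Ici 0)) (hlim : Tendsto f atTop (𝓝 a)) (hac : a < c)
    (hc : c < f 0) : ∃! x, 0 < x ∧ f x = c := by
  obtain ⟨B, hB⟩ := (hlim.eventually_lt_const hac).exists_forall_of_atTop
  obtain ⟨x, hx, hfx⟩ := intermediate_value_Icc' (le_max_right B 0) hcont.continuousOn
    ⟨(hB _ (le_max_left B 0)).le, hc.le⟩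
  have hx₀ : 0 < x := hx.1.lt_of_ne (by rintro rfl; linarith)
  refine ⟨x, ⟨hx₀, hfx⟩, fun y ⟨hy, hfy⟩ => ?_⟩
  exact hanti.injOn (mem_Ici.2 hy.le) (mem_Ici.2 hx₀.le) (hfy.trans hfx.symm)

theorem exists_unique_side_length_general (d : ℕ) (k : Fin d → ℤ)
    (hk : ∀ i, 3 ≤ k i)
    (hsum : (∑ i, ((k i : ℝ) - 2) / (k i : ℝ)) > 2) :
    ∃! l₀ : ℝ, 0 < l₀ ∧
      (∑ i, 2 * arcsin (cos (π / (k i : ℝ)) / cosh (l₀ / 2))) = 2 * π := by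
  have hk' : ∀ i, (3 : ℝ) ≤ k i := fun i => by exact_mod_cast hk i
  have hne : (Finset.univ : Finset (Fin d)).Nonempty :=
    Finset.nonempty_of_sum_ne_zero (f := fun i => ((k i : ℝ) - 2) / k i) (by linarith)
  set total : ℝ → ℝ := fun l => ∑ i, regularPolygonAngle (k i) l
  have hanti : StrictAntiOn total (Ici 0) := fun a ha b hb hab =>
    Finset.sum_lt_sum_of_nonempty hne fun i _ =>
      strictAntiOn_regularPolygonAngle (by linarith [hk' i]) ha hb hab
  have hzero : 2 * π < total 0 := by
    simp only [total, fun i => regularPolygonAngle_zero (by linarith [hk' i] : (1 : ℝ) ≤ k i),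
      ← Finset.mul_sum]
    nlinarith [pi_pos]
  exact existsUnique_pos_eq_of_strictAntiOn (f := total)
    (continuous_finsetSum _ fun i _ => continuous_regularPolygonAngle _) hanti
    (by simpa using tendsto_finsetSum _ fun i _ => tendsto_regularPolygonAngle_atTop (k i))
    two_pi_pos hzero

theorem exists_unique_side_length (d : ℕ) (hd : 3 ≤ d) (k : Fin d → ℤ)
    (hk : ∀ i, 3 ≤ k i)
    (hsum : (∑ i, ((k i : ℝ) - 2) / (k i : ℝ)) > 2) :
    ∃! l₀ : ℝ, 0 < l₀ ∧
      (∑ i, 2 * arcsin (cos (π / (k i : ℝ)) / cosh (l₀ / 2))) = 2 * π :=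
  exists_unique_side_length_general d k hk hsum
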